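/- arXiv:1503.05174 — 2 statements merged into one kernel-verified Lean document; each statement's English description precedes it below -/
import Mathlib

section
/- Let σ and η be elements of a complex Hilbert space and let ε ≥ 0 with ε < 1/2. Suppose (1) ‖σ‖ = 1; (2) |⟨σ, η⟩ - 1| ≤ ε; (3) |⟨σ, τ⟩| ≤ ε‖τ‖ for every τ with ⟨τ, η⟩ = 0. Then |‖η‖² - 1| ≤ 10ε. -/
/-!
Split `σ = P σ + τ` with `P` the orthogonal projection onto `ℂ ∙ η` and `τ ⊥ η`. Testing
hypothesis (3) on `τ` itself gives `‖τ‖² = ⟪σ, τ⟫ ≤ ε ‖τ‖`, so `‖τ‖ ≤ ε`. Hence `‖P σ‖² = 1 - ‖τ‖²`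
is close to `1`, while `‖P σ‖ ‖η‖ = |⟪σ, η⟫|` is close to `1` by (2); so `‖η‖` is close to `1`.
In fact `|‖η‖² - 1| ≤ 4ε`.
-/

open scoped InnerProductSpace

section
variable {𝕜 E : Type*} [RCLike 𝕜] [NormedAddCommGroup E] [InnerProductSpace 𝕜 E]

theorem Submodule.norm_starProjection_singleton_mul_norm (v w : E) :
    ‖(𝕜 ∙ v).starProjection w‖ * ‖v‖ = ‖⟪v, w⟫_𝕜‖ := by
  rcases eq_or_ne v 0 with rfl | hv
  · simp
  have h := congrArg norm (smul_starProjection_singleton 𝕜 (v := v) w)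
  rw [norm_smul, norm_smul, RCLike.norm_ofReal, abs_of_nonneg (by positivity)] at h
  refine mul_left_cancel₀ (norm_ne_zero_iff.2 hv) ?_
  linear_combination h

theorem Submodule.inner_starProjection_right_self (K : Submodule 𝕜 E) [K.HasOrthogonalProjection]
    (x : E) : ⟪x, K.starProjection x⟫_𝕜 = (‖K.starProjection x‖ ^ 2 : 𝕜) := by
  rw [← inner_self_eq_norm_sq_to_K, K.inner_starProjection_left_eq_right,
    K.starProjection_eq_self_iff.2 (K.starProjection_apply_mem x)]

end

theorem le_of_sq_le_mul {q ε : ℝ} (hε : 0 ≤ ε) (h : q ^ 2 ≤ ε * q) : q ≤ ε := by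
  nlinarith

theorem abs_sq_sub_one_le_four_mul {p q n ε : ℝ} (hpq : p ^ 2 + q ^ 2 = 1) (hq0 : 0 ≤ q)
    (hqε : q ≤ ε) (hε : ε < 1 / 2) (hn : 0 ≤ n) (hpn : |p * n - 1| ≤ ε) :
    |n ^ 2 - 1| ≤ 4 * ε := by
  rw [abs_le] at hpn ⊢
  have hp : 0 < p := by nlinarith
  refine ⟨by nlinarith, ?_⟩
  have hp2 : 1 - ε ^ 2 ≤ p ^ 2 := by nlinarith
  have h : n ^ 2 * ((1 - ε) * (1 + ε)) ≤ (1 + ε) ^ 2 :=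
    calc n ^ 2 * ((1 - ε) * (1 + ε)) ≤ n ^ 2 * p ^ 2 := by gcongr; linarith
      _ = (p * n) ^ 2 := by ring
      _ ≤ (1 + ε) ^ 2 := pow_le_pow_left₀ (mul_nonneg hp.le hn) (by linarith) 2
  have h' : n ^ 2 * (1 - ε) ≤ 1 + ε := by nlinarith
  nlinarith

theorem stmt0_general {H : Type*} [NormedAddCommGroup H] [InnerProductSpace ℂ H]
    (σ η : H) (ε : ℝ) (hε : ε < 1 / 2)
    (h1 : ‖σ‖ = 1)
    (h2 : ‖(inner ℂ σ η : ℂ) - 1‖ ≤ ε)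
    (h3 : ∀ τ : H, (inner ℂ τ η : ℂ) = 0 → ‖(inner ℂ σ τ : ℂ)‖ ≤ ε * ‖τ‖) :
    |‖η‖ ^ 2 - 1| ≤ 10 * ε := by
  set K := ℂ ∙ η
  set τ := Kᗮ.starProjection σ
  have hε0 : 0 ≤ ε := (norm_nonneg _).trans h2
  have hτη : ⟪τ, η⟫_ℂ = 0 :=
    Submodule.mem_orthogonal_singleton_iff_inner_left.1 (Kᗮ.starProjection_apply_mem σ)
  have hτ : ‖τ‖ ≤ ε := by
    refine le_of_sq_le_mul hε0 ?_
    have h := h3 τ hτη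
    rwa [Kᗮ.inner_starProjection_right_self, norm_pow, RCLike.norm_ofReal, abs_norm] at h
  have hpyth : ‖K.starProjection σ‖ ^ 2 + ‖τ‖ ^ 2 = 1 := by
    rw [← Submodule.norm_sq_eq_add_norm_sq_starProjection, h1, one_pow]
  have hproj : |‖K.starProjection σ‖ * ‖η‖ - 1| ≤ ε := by
    rw [Submodule.norm_starProjection_singleton_mul_norm, norm_inner_symm]
    simpa using (abs_norm_sub_norm_le (⟪σ, η⟫_ℂ) 1).trans h2
  linarith [abs_sq_sub_one_le_four_mul hpyth (norm_nonneg τ) hτ hε (norm_nonneg η) hproj]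

/-- Lemma 5 of the paper: the two-plane Hilbert space lemma used in the
Bergman kernel asymptotics. -/
theorem stmt0 {H : Type*} [NormedAddCommGroup H] [InnerProductSpace ℂ H]
    (σ η : H) (ε : ℝ) (hε0 : 0 ≤ ε) (hε : ε < 1 / 2)
    (h1 : ‖σ‖ = 1)
    (h2 : ‖(inner ℂ σ η : ℂ) - 1‖ ≤ ε)
    (h3 : ∀ τ : H, (inner ℂ τ η : ℂ) = 0 → ‖(inner ℂ σ τ : ℂ)‖ ≤ ε * ‖τ‖) :
    |‖η‖ ^ 2 - 1| ≤ 10 * ε :=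
  stmt0_general σ η ε hε h1 h2 h3
end

section
/- Let g : Δ* → GL(N+1, ℂ) be holomorphic with a meromorphic extension over 0, factorized as g(t) = t^A R(t) with A = diag(λ₀, …, λ_N), λ₀ = 0 ≥ λ₁ ≥ ⋯ ≥ λ_N integers, and R holomorphic invertible on Δ with R(0) = 1. Let Γ : Δ → ℂ^{N+1}∖{0} be holomorphic with Γ(0) having nonzero component in the zero-eigenspace of A (i.e., nonzero first coordinate block). Define γ̃(t) = R(t)^{−1} t^{−A} Γ(t). Then both γ̃(t) and g(t)γ̃(t) = Γ(t) are holomorphic and nonvanishing at t = 0. -/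
/-! Since every `λ_α ≤ 0`, `t^{-A}` is a polynomial matrix, so `γ̃ = R⁻¹ t^{-A} Γ` is holomorphic
on the disc, and `g γ̃ = t^A R R⁻¹ t^{-A} Γ = Γ` away from `0`. At `t = 0` we have `R(0) = 1`, and
`t^{-A}` keeps exactly the coordinates with `λ_α = 0`, where `Γ(0)` has a nonzero entry. -/

open Matrix

section MatrixEntries

variable {𝕜 n : Type*} [NontriviallyNormedField 𝕜] [Fintype n] {s : Set 𝕜} {M : 𝕜 → Matrix n n 𝕜}

theorem DifferentiableOn.matrix_mulVec {v : 𝕜 → n → 𝕜}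
    (hM : ∀ i j, DifferentiableOn 𝕜 (fun t => M t i j) s) (hv : DifferentiableOn 𝕜 v s) :
    DifferentiableOn 𝕜 (fun t => M t *ᵥ v t) s := by
  refine differentiableOn_pi.mpr fun i => ?_
  simp only [mulVec, dotProduct]
  exact .fun_sum fun j _ => (hM i j).mul (differentiableOn_pi.mp hv j)

variable [DecidableEq n]

theorem DifferentiableOn.matrix_det
    (hM : ∀ i j, DifferentiableOn 𝕜 (fun t => M t i j) s) :
    DifferentiableOn 𝕜 (fun t => (M t).det) s := by
  simp only [det_apply']
  exact .fun_sum fun σ _ => .const_mul (.fun_finsetProd fun i _ => hM (σ i) i) _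

theorem DifferentiableOn.matrix_adjugate
    (hM : ∀ i j, DifferentiableOn 𝕜 (fun t => M t i j) s) (i j : n) :
    DifferentiableOn 𝕜 (fun t => (M t).adjugate i j) s := by
  simp only [adjugate_apply]
  refine DifferentiableOn.matrix_det fun k l => ?_
  by_cases hk : k = j
  · simp only [hk, updateRow_self]
    exact differentiableOn_const _
  · simpa only [updateRow_ne hk] using hM k l

theorem DifferentiableOn.matrix_inv
    (hM : ∀ i j, DifferentiableOn 𝕜 (fun t => M t i j) s)
    (hdet : ∀ t ∈ s, IsUnit (M t).det) (i j : n) :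
    DifferentiableOn 𝕜 (fun t => (M t)⁻¹ i j) s := by
  simp only [inv_def, Matrix.smul_apply, Ring.inverse_eq_inv', smul_eq_mul]
  exact ((DifferentiableOn.matrix_det hM).inv fun t ht => (hdet t ht).ne_zero).mul
    (DifferentiableOn.matrix_adjugate hM i j)

end MatrixEntries

theorem diagonal_zpow_mul_mulVec_inv_mulVec {K n : Type*} [Field K] [Fintype n] [DecidableEq n]
    {t : K} (ht : t ≠ 0) (lam : n → ℤ) {R : Matrix n n K} (hR : IsUnit R.det) (v : n → K) :
    (diagonal (fun i => t ^ lam i) * R) *ᵥ (R⁻¹ *ᵥ fun i => t ^ (-lam i) * v i) = v := by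
  rw [mulVec_mulVec, Matrix.mul_assoc, mul_nonsing_inv _ hR, Matrix.mul_one]
  funext i
  rw [mulVec_diagonal, ← mul_assoc, ← zpow_add₀ ht, add_neg_cancel, zpow_zero, one_mul]

theorem stmt18_general (N : ℕ) (lam : Fin (N + 1) → ℤ)
    (hle : ∀ i, lam i ≤ 0)
    (R : ℂ → Matrix (Fin (N + 1)) (Fin (N + 1)) ℂ)
    (hRhol : ∀ i j, DifferentiableOn ℂ (fun t => R t i j) (Metric.ball (0 : ℂ) 1))
    (hRinv : ∀ t ∈ Metric.ball (0 : ℂ) 1, IsUnit (R t).det)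
    (hR0 : R 0 = 1)
    (Γ : ℂ → Fin (N + 1) → ℂ)
    (hΓ : DifferentiableOn ℂ Γ (Metric.ball (0 : ℂ) 1))
    (hΓne : ∀ t ∈ Metric.ball (0 : ℂ) 1, Γ t ≠ 0)
    (hΓ0 : ∃ i, lam i = 0 ∧ Γ 0 i ≠ 0)
    (γ : ℂ → Fin (N + 1) → ℂ)
    (hγdef : ∀ t : ℂ, γ t = (R t)⁻¹.mulVec fun i => t ^ (-(lam i)) * Γ t i) :
    DifferentiableOn ℂ γ (Metric.ball (0 : ℂ) 1) ∧ γ 0 ≠ 0 ∧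
      (∀ t ∈ Metric.ball (0 : ℂ) 1 \ {0},
        (Matrix.diagonal (fun i => t ^ lam i) * R t).mulVec (γ t) = Γ t) ∧
      Γ 0 ≠ 0 := by
  have hγ : γ = fun t => (R t)⁻¹ *ᵥ fun i => t ^ (-lam i) * Γ t i := funext hγdef
  have htwist : DifferentiableOn ℂ (fun t => fun i => t ^ (-lam i) * Γ t i) (Metric.ball 0 1) :=
    differentiableOn_pi.mpr fun i =>
      (differentiableOn_id.zpow (.inr (neg_nonneg.mpr (hle i)))).mul (differentiableOn_pi.mp hΓ i)
  refine ⟨hγ ▸ .matrix_mulVec (.matrix_inv hRhol hRinv) htwist, ?_, ?_, hΓne 0 (by simp)⟩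
  · obtain ⟨i, hi, hΓi⟩ := hΓ0
    intro hγ0
    have hγ0i := congrFun (hγdef 0) i
    rw [hγ0, hR0, inv_one, one_mulVec, hi, neg_zero, zpow_zero, one_mul] at hγ0i
    exact hΓi hγ0i.symm
  · rintro t ⟨ht, ht0⟩
    rw [hγdef]
    exact diagonal_zpow_mul_mulVec_inv_mulVec ht0 lam (hRinv t ht) (Γ t)

/-- The construction in the proof of Lemma 8 of Section 5.2: with `λ₀ = 0`,
all `λ_α ≤ 0`, `R(0) = 1`, and `Γ(0)` having a nonzero component in the
zero-eigenspace of `A`, the map `γ̃(t) = R(t)⁻¹ t^{-A} Γ(t)` and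
`g(t)γ̃(t) = Γ(t)` are both holomorphic and nonvanishing at `t = 0`. -/
theorem stmt18 (N : ℕ) (lam : Fin (N + 1) → ℤ) (hanti : Antitone lam)
    (hlam0 : lam 0 = 0) (hle : ∀ i, lam i ≤ 0)
    (R : ℂ → Matrix (Fin (N + 1)) (Fin (N + 1)) ℂ)
    (hRhol : ∀ i j, DifferentiableOn ℂ (fun t => R t i j) (Metric.ball (0 : ℂ) 1))
    (hRinv : ∀ t ∈ Metric.ball (0 : ℂ) 1, IsUnit (R t).det)
    (hR0 : R 0 = 1)
    (Γ : ℂ → Fin (N + 1) → ℂ)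
    (hΓ : DifferentiableOn ℂ Γ (Metric.ball (0 : ℂ) 1))
    (hΓne : ∀ t ∈ Metric.ball (0 : ℂ) 1, Γ t ≠ 0)
    (hΓ0 : ∃ i, lam i = 0 ∧ Γ 0 i ≠ 0)
    (γ : ℂ → Fin (N + 1) → ℂ)
    (hγdef : ∀ t : ℂ, γ t = (R t)⁻¹.mulVec fun i => t ^ (-(lam i)) * Γ t i) :
    DifferentiableOn ℂ γ (Metric.ball (0 : ℂ) 1) ∧ γ 0 ≠ 0 ∧
      (∀ t ∈ Metric.ball (0 : ℂ) 1 \ {0},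
        (Matrix.diagonal (fun i => t ^ lam i) * R t).mulVec (γ t) = Γ t) ∧
      Γ 0 ≠ 0 :=
  stmt18_general N lam hle R hRhol hRinv hR0 Γ hΓ hΓne hΓ0 γ hγdef
end
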